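/- Let M be a smooth manifold and let 𝓕 be an admissible sheaf of local vector fields on M, with dim 𝓕(U) ≤ N for every connected open U. Then for every p ∈ M there exists a connected open neighborhood U of p such that the germ map 𝓕(U) → 𝔊^𝓕_p, K ↦ germ_p(K), is a linear isomorphism; in particular dim 𝔊^𝓕_p = κ^𝓕_p = dim 𝓕(U) ≤ N. -/

import Mathlib

open Set Manifold Topology

noncomputable section

variable {E : Type*} [NormedAddCommGroup E] [NormedSpace ℝ E]
  {H : Type*} [TopologicalSpace H]

/-- A (raw) vector field on the manifold `M`, given by a choice of tangent vector at every
point.  A *local* vector field defined on an open set `U ⊆ M` is represented by such a global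
assignment, where only the values on `U` are relevant. -/
abbrev VF (I : ModelWithCorners ℝ E H) (M : Type*) [TopologicalSpace M] [ChartedSpace H M] :
    Type _ :=
  (x : M) → TangentSpace I x

variable (I : ModelWithCorners ℝ E H) (M : Type*) [TopologicalSpace M] [ChartedSpace H M]
  [IsManifold I ((⊤ : ℕ∞) : WithTop ℕ∞) M]

/-- Smoothness (`C^∞`) of a vector field on a subset `U` of `M`, as smoothness of the
corresponding section of the tangent bundle. -/
def IsSmoothVFOn (X : VF I M) (U : Set M) : Prop :=
  ContMDiffOn I I.tangent (⊤ : ℕ∞) (fun x => (⟨x, X x⟩ : TangentBundle I M)) U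

/-- A sheaf of local vector fields on the manifold `M`: to every connected open set `U ⊆ M` it
assigns a linear subspace `carrier U` of the smooth vector fields on `U` (represented by global
assignments of tangent vectors, two of which describe the same local field on `U` iff they agree
on `U`), closed under restriction to connected open subsets and satisfying the gluing axiom. -/
structure VFSheaf where
  carrier : Set M → Set (VF I M)
  smooth_mem : ∀ U, IsOpen U → IsConnected U → ∀ X ∈ carrier U, IsSmoothVFOn I M X U
  zero_mem : ∀ U, IsOpen U → IsConnected U → (0 : VF I M) ∈ carrier U
  add_mem : ∀ U, IsOpen U → IsConnected U → ∀ X ∈ carrier U, ∀ Y ∈ carrier U, X + Y ∈ carrier U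
  smul_mem : ∀ U, IsOpen U → IsConnected U → ∀ (c : ℝ), ∀ X ∈ carrier U, c • X ∈ carrier U
  congr_mem : ∀ U, IsOpen U → IsConnected U → ∀ X ∈ carrier U, ∀ Y : VF I M,
    (∀ x ∈ U, Y x = X x) → Y ∈ carrier U
  restrict_mem : ∀ U, IsOpen U → IsConnected U → ∀ V, IsOpen V → IsConnected V → V ⊆ U →
    ∀ X ∈ carrier U, X ∈ carrier V
  glue_mem : ∀ U, IsOpen U → IsConnected U → ∀ S : Set (Set M),
    (∀ V ∈ S, IsOpen V ∧ IsConnected V) → U = ⋃₀ S → ∀ X : VF I M, IsSmoothVFOn I M X U →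
    (∀ V ∈ S, X ∈ carrier V) → X ∈ carrier U

variable {I M}

/-- The unique continuation property for a sheaf of local vector fields: a field of the sheaf
on a connected open set vanishing on some non-empty open subset vanishes identically. -/
def VFSheaf.UniqueContinuation (F : VFSheaf I M) : Prop :=
  ∀ U, IsOpen U → IsConnected U → ∀ X ∈ F.carrier U,
    (∃ V : Set M, V.Nonempty ∧ IsOpen V ∧ V ⊆ U ∧ ∀ x ∈ V, X x = 0) → ∀ x ∈ U, X x = 0

variable (I M) in
/-- Restriction of global tangent-vector assignments to a subset `U`, as a linear map. -/
def resVF (U : Set M) : VF I M →ₗ[ℝ] ((x : U) → TangentSpace I (x : M)) where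
  toFun X := fun x => X x
  map_add' _ _ := rfl
  map_smul' _ _ := rfl

/-- The dimension (as a cardinal) of the space `𝓕(U)` of local fields of the sheaf `F` on `U`,
computed as the rank of the space of restrictions to `U` of members of `F.carrier U`. -/
def fdim (F : VFSheaf I M) (U : Set M) : Cardinal :=
  Module.rank ℝ ↥(Submodule.span ℝ (resVF I M U '' F.carrier U))

/-- A sheaf of local vector fields has bounded rank if the dimensions of the spaces `𝓕(U)`,
`U` connected open, are uniformly bounded. -/
def VFSheaf.BoundedRank (F : VFSheaf I M) : Prop :=
  ∃ N : ℕ, ∀ U : Set M, IsOpen U → IsConnected U → fdim F U ≤ (N : Cardinal)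

/-- A sheaf of local vector fields is admissible if it has the unique continuation property
and bounded rank. -/
def VFSheaf.Admissible (F : VFSheaf I M) : Prop :=
  F.UniqueContinuation ∧ F.BoundedRank

/-- `κ^𝓕_p`: the supremum (= maximum) of `dim 𝓕(U)` over connected open neighbourhoods `U`
of `p`. -/
def kappa (F : VFSheaf I M) (p : M) : Cardinal :=
  ⨆ U : {U : Set M // IsOpen U ∧ IsConnected U ∧ p ∈ U}, fdim F (U : Set M)

/-- A sheaf of local vector fields is regular if `p ↦ κ^𝓕_p` is constant on `M`. -/
def VFSheaf.Regular (F : VFSheaf I M) : Prop :=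
  ∀ p q : M, kappa F p = kappa F q

section Germs

variable (I M) in
/-- The subspace of tangent-vector assignments vanishing on some connected open neighbourhood
of `p`; the quotient by this subspace is the space of germs at `p`. -/
def germNull [LocallyConnectedSpace M] (p : M) : Submodule ℝ (VF I M) where
  carrier := {X | ∃ V : Set M, IsOpen V ∧ IsConnected V ∧ p ∈ V ∧ ∀ x ∈ V, X x = 0}
  zero_mem' :=
    ⟨connectedComponentIn univ p, isOpen_univ.connectedComponentIn,
      isConnected_connectedComponentIn_iff.mpr (mem_univ p),
      mem_connectedComponentIn (mem_univ p), fun _ _ => rfl⟩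
  add_mem' := by
    rintro X Y ⟨V₁, hV₁o, hV₁c, hpV₁, hX⟩ ⟨V₂, hV₂o, hV₂c, hpV₂, hY⟩
    refine ⟨connectedComponentIn (V₁ ∩ V₂) p, (hV₁o.inter hV₂o).connectedComponentIn,
      isConnected_connectedComponentIn_iff.mpr ⟨hpV₁, hpV₂⟩,
      mem_connectedComponentIn ⟨hpV₁, hpV₂⟩, fun x hx => ?_⟩
    have hx' := connectedComponentIn_subset (V₁ ∩ V₂) p hx
    show X x + Y x = 0
    rw [hX x hx'.1, hY x hx'.2, add_zero]
  smul_mem' := by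
    rintro c X ⟨V, hVo, hVc, hpV, hX⟩
    exact ⟨V, hVo, hVc, hpV, fun x hx => by show c • X x = 0; rw [hX x hx, smul_zero]⟩

variable (I M) in
/-- The space of germs at `p` of (arbitrary) local vector fields on `M`. -/
abbrev GermSpace [LocallyConnectedSpace M] (p : M) : Type _ :=
  VF I M ⧸ germNull I M p

variable (I M) in
/-- The germ at `p` of a local vector field, as a linear map. -/
def germAt [LocallyConnectedSpace M] (p : M) : VF I M →ₗ[ℝ] GermSpace I M p :=
  (germNull I M p).mkQ

/-- `𝔊^𝓕_p`: the space of germs at `p` of local `𝓕`-fields of the sheaf `F`, i.e. germs at `p`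
of fields `K ∈ 𝓕(U)` with `U` a connected open neighbourhood of `p`. -/
def stalk [LocallyConnectedSpace M] (F : VFSheaf I M) (p : M) :
    Submodule ℝ (GermSpace I M p) :=
  Submodule.span ℝ {g | ∃ U : Set M, ∃ X : VF I M,
    IsOpen U ∧ IsConnected U ∧ p ∈ U ∧ X ∈ F.carrier U ∧ g = germAt I M p X}

/-- A connected open set `U ∋ p` is `𝓕`-special for `p` if the (linear) germ map
`𝓕(U) → 𝔊^𝓕_p` is a linear isomorphism, i.e. it is injective (fields in `𝓕(U)` with the same
germ at `p` agree on `U`) and surjective onto the space of `𝓕`-germs at `p`. -/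
def IsSpecial [LocallyConnectedSpace M] (F : VFSheaf I M) (U : Set M) (p : M) : Prop :=
  IsOpen U ∧ IsConnected U ∧ p ∈ U ∧
    (∀ K₁ ∈ F.carrier U, ∀ K₂ ∈ F.carrier U,
      germAt I M p K₁ = germAt I M p K₂ → ∀ x ∈ U, K₁ x = K₂ x) ∧
    (∀ g ∈ stalk F p, ∃ K ∈ F.carrier U, germAt I M p K = g)

/-- A transport of `𝓕`-germs along the curve `γ : [a,b] → M`: a family of germs
`g t ∈ 𝔊^𝓕_{γ t}` which is locally induced by a single local field of the sheaf `F`. -/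
def IsTransport [LocallyConnectedSpace M] (F : VFSheaf I M) (a b : ℝ) (γ : ℝ → M)
    (g : (t : ℝ) → GermSpace I M (γ t)) : Prop :=
  ∀ t₀ ∈ Icc a b, ∃ ε > (0 : ℝ), ∃ U : Set M, ∃ K : VF I M,
    IsOpen U ∧ IsConnected U ∧ K ∈ F.carrier U ∧
    ∀ t ∈ Ioo (t₀ - ε) (t₀ + ε) ∩ Icc a b, γ t ∈ U ∧ g t = germAt I M (γ t) K


/-! Choose a connected open neighbourhood `U` of `p` on which `dim 𝓕(U)` attains its finite
maximum `κ^𝓕_p`. For every connected open neighbourhood `W` of `p`, unique continuation says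
that a field of `𝓕(W)` is determined by its germ at `p`, so `dim 𝓕(W)` is the dimension of the
space of germs of `𝓕(W)`; this space of germs can only grow when `W` shrinks. For connected
`W ⊆ U` containing `p` the maximality of `U` therefore forces both spaces of germs to coincide;
as any two neighbourhoods of `p` contain a common connected one, every `𝓕`-germ at `p` is the
germ of a field of `𝓕(U)`. -/

theorem exists_eq_ciSup_of_le_natCast {ι : Sort*} [Nonempty ι] {f : ι → Cardinal} {N : ℕ}
    (hf : ∀ i, f i ≤ N) : ∃ i, f i = ⨆ i, f i := by
  have hfin : (range f).Finite := ((finite_Iic N).image ((↑) : ℕ → Cardinal)).subset <| by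
    rintro _ ⟨i, rfl⟩
    obtain ⟨n, hn⟩ := Cardinal.lt_aleph0.mp ((hf i).trans_lt Cardinal.natCast_lt_aleph0)
    exact ⟨n, by rw [mem_Iic, ← Nat.cast_le (α := Cardinal), ← hn]; exact hf i, hn.symm⟩
  exact (range_nonempty f).csSup_mem hfin

theorem Submodule.eq_of_le_of_rank_le {K V : Type*} [DivisionRing K] [AddCommGroup V]
    [Module K V] {S T : Submodule K V} (hle : S ≤ T) (hrank : Module.rank K T ≤ Module.rank K S)
    (hS : Module.rank K S < Cardinal.aleph0) : S = T := by
  have : FiniteDimensional K S := Module.rank_lt_aleph0_iff.mp hS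
  have : FiniteDimensional K T := Module.rank_lt_aleph0_iff.mp (hrank.trans_lt hS)
  refine Submodule.eq_of_le_of_finrank_le hle (Nat.cast_le (α := Cardinal).mp ?_)
  rwa [Module.finrank_eq_rank, Module.finrank_eq_rank]

namespace VFSheaf

variable {F : VFSheaf I M} {U V : Set M} {p : M}

theorem mem_carrier_of_mem_span (hUo : IsOpen U) (hUc : IsConnected U) {X : VF I M}
    (hX : X ∈ Submodule.span ℝ (F.carrier U)) : X ∈ F.carrier U := by
  induction hX using Submodule.span_induction with
  | mem X hX => exact hX
  | zero => exact F.zero_mem U hUo hUc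
  | add X Y _ _ hX hY => exact F.add_mem U hUo hUc X hX Y hY
  | smul c X _ hX => exact F.smul_mem U hUo hUc c X hX

theorem fdim_le_kappa {N : ℕ}
    (hN : ∀ U : Set M, IsOpen U → IsConnected U → fdim F U ≤ (N : Cardinal))
    (hUo : IsOpen U) (hUc : IsConnected U) (hpU : p ∈ U) : fdim F U ≤ kappa F p :=
  le_ciSup (f := fun W : {W : Set M // IsOpen W ∧ IsConnected W ∧ p ∈ W} => fdim F W)
    ⟨N, by rintro _ ⟨W, rfl⟩; exact hN W W.2.1 W.2.2.1⟩ ⟨U, hUo, hUc, hpU⟩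

theorem exists_fdim_eq_kappa [LocallyConnectedSpace M] {N : ℕ}
    (hN : ∀ U : Set M, IsOpen U → IsConnected U → fdim F U ≤ (N : Cardinal)) (p : M) :
    ∃ U, IsOpen U ∧ IsConnected U ∧ p ∈ U ∧ fdim F U = kappa F p := by
  obtain ⟨U, hUo, hpU, hUc⟩ := (LocallyConnectedSpace.open_connected_basis p).ex_mem
  have : Nonempty {U : Set M // IsOpen U ∧ IsConnected U ∧ p ∈ U} := ⟨U, hUo, hUc, hpU⟩
  obtain ⟨⟨W, hWo, hWc, hpW⟩, hW⟩ := exists_eq_ciSup_of_le_natCast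
    fun W : {U : Set M // IsOpen U ∧ IsConnected U ∧ p ∈ U} => hN W W.2.1 W.2.2.1
  exact ⟨W, hWo, hWc, hpW, hW⟩

section Germs

variable [LocallyConnectedSpace M]

def germsOn (F : VFSheaf I M) (U : Set M) (p : M) : Submodule ℝ (GermSpace I M p) :=
  (Submodule.span ℝ (F.carrier U)).map (germAt I M p)

theorem germsOn_le_stalk (hUo : IsOpen U) (hUc : IsConnected U) (hpU : p ∈ U) :
    F.germsOn U p ≤ stalk F p := by
  rw [germsOn, Submodule.map_span_le]
  exact fun X hX => Submodule.subset_span ⟨U, X, hUo, hUc, hpU, hX, rfl⟩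

theorem germsOn_le_of_subset (hVo : IsOpen V) (hVc : IsConnected V) (hVU : V ⊆ U)
    (hUo : IsOpen U) (hUc : IsConnected U) : F.germsOn U p ≤ F.germsOn V p :=
  Submodule.map_mono <| Submodule.span_mono fun X hX =>
    F.restrict_mem U hUo hUc V hVo hVc hVU X hX

theorem UniqueContinuation.germAt_eq_zero_iff (hF : F.UniqueContinuation) (hUo : IsOpen U)
    (hUc : IsConnected U) (hpU : p ∈ U) {X : VF I M} (hX : X ∈ F.carrier U) :
    germAt I M p X = 0 ↔ ∀ x ∈ U, X x = 0 := by
  rw [germAt, Submodule.mkQ_apply, Submodule.Quotient.mk_eq_zero]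
  refine ⟨fun ⟨W, hWo, _, hpW, hW⟩ => ?_, fun h => ⟨U, hUo, hUc, hpU, h⟩⟩
  exact hF U hUo hUc X hX
    ⟨W ∩ U, ⟨p, hpW, hpU⟩, hWo.inter hUo, inter_subset_right, fun x hx => hW x hx.1⟩

theorem UniqueContinuation.rank_germsOn (hF : F.UniqueContinuation) (hUo : IsOpen U)
    (hUc : IsConnected U) (hpU : p ∈ U) : Module.rank ℝ (F.germsOn U p) = fdim F U := by
  set S := Submodule.span ℝ (F.carrier U)
  have hker : LinearMap.ker ((germAt I M p).domRestrict S) =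
      LinearMap.ker ((resVF I M U).domRestrict S) := by
    ext ⟨X, hX⟩
    rw [LinearMap.mem_ker, LinearMap.mem_ker, LinearMap.domRestrict_apply,
      LinearMap.domRestrict_apply,
      hF.germAt_eq_zero_iff hUo hUc hpU (mem_carrier_of_mem_span hUo hUc hX)]
    exact ⟨fun h => funext fun x => h x x.2, fun h x hx => congrFun h ⟨x, hx⟩⟩
  calc Module.rank ℝ (F.germsOn U p)
      = Module.rank ℝ (S ⧸ LinearMap.ker ((germAt I M p).domRestrict S)) := by
        rw [(LinearMap.quotKerEquivRange _).rank_eq, LinearMap.range_domRestrict]; rfl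
    _ = Module.rank ℝ (S ⧸ LinearMap.ker ((resVF I M U).domRestrict S)) := by rw [hker]
    _ = fdim F U := by
        rw [(LinearMap.quotKerEquivRange _).rank_eq, LinearMap.range_domRestrict, fdim,
          Submodule.span_image]

theorem UniqueContinuation.stalk_eq_germsOn (hF : F.UniqueContinuation) (hUo : IsOpen U)
    (hUc : IsConnected U) (hpU : p ∈ U) (hfin : fdim F U < Cardinal.aleph0)
    (hmax : ∀ W, IsOpen W → IsConnected W → p ∈ W → fdim F W ≤ fdim F U) :
    stalk F p = F.germsOn U p := by
  refine le_antisymm (Submodule.span_le.mpr ?_) (germsOn_le_stalk hUo hUc hpU)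
  rintro _ ⟨V, X, hVo, hVc, hpV, hXV, rfl⟩
  obtain ⟨W, ⟨hWo, hpW, hWc⟩, hWUV⟩ := (LocallyConnectedSpace.open_connected_basis p).mem_iff.mp
    ((hUo.inter hVo).mem_nhds ⟨hpU, hpV⟩)
  have hUW : F.germsOn U p = F.germsOn W p := by
    refine Submodule.eq_of_le_of_rank_le
      (germsOn_le_of_subset hWo hWc (hWUV.trans inter_subset_left) hUo hUc) ?_ ?_
    · rw [hF.rank_germsOn hUo hUc hpU, hF.rank_germsOn hWo hWc hpW]
      exact hmax W hWo hWc hpW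
    · rwa [hF.rank_germsOn hUo hUc hpU]
  rw [hUW]
  exact germsOn_le_of_subset hWo hWc (hWUV.trans inter_subset_right) hVo hVc
    (Submodule.mem_map_of_mem (Submodule.subset_span hXV))

theorem UniqueContinuation.isSpecial (hF : F.UniqueContinuation) (hUo : IsOpen U)
    (hUc : IsConnected U) (hpU : p ∈ U) (hstalk : stalk F p = F.germsOn U p) :
    IsSpecial F U p := by
  refine ⟨hUo, hUc, hpU, fun K₁ hK₁ K₂ hK₂ hK x hx => ?_, fun g hg => ?_⟩
  · have hsub : K₁ - K₂ ∈ F.carrier U := mem_carrier_of_mem_span hUo hUc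
      (sub_mem (Submodule.subset_span hK₁) (Submodule.subset_span hK₂))
    rw [← sub_eq_zero, ← Pi.sub_apply]
    exact (hF.germAt_eq_zero_iff hUo hUc hpU hsub).mp (by rw [map_sub, hK, sub_self]) x hx
  · rw [hstalk] at hg
    obtain ⟨K, hK, rfl⟩ := hg
    exact ⟨K, mem_carrier_of_mem_span hUo hUc hK, rfl⟩

end Germs

end VFSheaf

/-- For an admissible sheaf `𝓕` with `dim 𝓕(U) ≤ N` on all connected open
sets, every point `p` has a connected open neighbourhood `U` (containing `p`: this is part of
`IsSpecial`) on which the germ map `𝓕(U) → 𝔊^𝓕_p` is a linear isomorphism; in particular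
`dim 𝔊^𝓕_p = κ^𝓕_p = dim 𝓕(U) ≤ N`. -/
theorem statement4 [LocallyConnectedSpace M] (F : VFSheaf I M) (hF : F.Admissible)
    (N : ℕ) (hN : ∀ U : Set M, IsOpen U → IsConnected U → fdim F U ≤ (N : Cardinal)) (p : M) :
    ∃ U : Set M, IsSpecial F U p ∧
      Module.rank ℝ ↥(stalk F p) = kappa F p ∧ kappa F p = fdim F U ∧
      fdim F U ≤ (N : Cardinal) := by
  obtain ⟨U, hUo, hUc, hpU, hUκ⟩ := VFSheaf.exists_fdim_eq_kappa hN p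
  have hstalk : stalk F p = F.germsOn U p :=
    hF.1.stalk_eq_germsOn hUo hUc hpU ((hN U hUo hUc).trans_lt Cardinal.natCast_lt_aleph0)
      fun W hWo hWc hpW => hUκ ▸ VFSheaf.fdim_le_kappa hN hWo hWc hpW
  refine ⟨U, hF.1.isSpecial hUo hUc hpU hstalk, ?_, hUκ.symm, hN U hUo hUc⟩
  rw [hstalk, hF.1.rank_germsOn hUo hUc hpU, hUκ]
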